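/- Tensor product structure: let C be the subalgebra {T ∈ B(H) : T commutes with a₁, a₂ and a₃} of B(H), and let ι : Matrix (Fin 2) (Fin 2) ℂ → B(H) be the unital star-algebra homomorphism determined by ι(σᵢ) = aᵢ (i = 1,2,3, with σᵢ the standard Pauli matrices). Then there exists a ℂ-algebra equivalence π : (Matrix (Fin 2) (Fin 2) ℂ) ⊗[ℂ] C ≃ B(H) satisfying π(m ⊗ b) = ι(m) ∘ b for every m ∈ Matrix (Fin 2) (Fin 2) ℂ and b ∈ C; moreover π is star-preserving. -/

import Mathlib

open Complex

noncomputable section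

/-- The Hilbert space `H := ℓ²(ℤ, ℂ)`. -/
abbrev H : Type := lp (fun _ : ℤ => ℂ) 2

/-- The orthonormal basis vectors `e ℓ = lp.single 2 ℓ 1`. -/
def e (ℓ : ℤ) : H := lp.single 2 ℓ 1

/-- `a₃ := U(π)`. -/
def a₃ (U : ℝ → (H →L[ℂ] H)) : H →L[ℂ] H := U Real.pi

/-- `a₊ := (1/2) • ((1 − U(π)) ∘ V*)`. -/
def aPlus (U : ℝ → (H →L[ℂ] H)) (V : unitary (H →L[ℂ] H)) : H →L[ℂ] H :=
  ((1 : ℂ) / 2) • ((1 - U Real.pi) ∘L star (V : H →L[ℂ] H))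

/-- `a₋ := (1/2) • ((1 + U(π)) ∘ V)`. -/
def aMinus (U : ℝ → (H →L[ℂ] H)) (V : unitary (H →L[ℂ] H)) : H →L[ℂ] H :=
  ((1 : ℂ) / 2) • ((1 + U Real.pi) ∘L (V : H →L[ℂ] H))

/-- `a₁ := a₊ + a₋`. -/
def a₁ (U : ℝ → (H →L[ℂ] H)) (V : unitary (H →L[ℂ] H)) : H →L[ℂ] H :=
  aPlus U V + aMinus U V

/-- `a₂ := −i•a₊ + i•a₋`. -/
def a₂ (U : ℝ → (H →L[ℂ] H)) (V : unitary (H →L[ℂ] H)) : H →L[ℂ] H :=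
  (-Complex.I) • aPlus U V + Complex.I • aMinus U V

/-!
Since `1, σ₁, σ₂, σ₃` span `M₂(ℂ)`, the commutant `C` of `{a₁, a₂, a₃}` is the commutant of the
whole image of `ι` (closing under `star` changes nothing, `ι` being a star map). For any unital
copy of `Mₙ(R)` inside an algebra `A`, with matrix units `Eᵢⱼ = ι (single i j 1)`, every `T : A`
is `∑ᵢⱼ Eᵢⱼ cᵢⱼ(T)` with `cᵢⱼ(T) = ∑ₖ Eₖᵢ T Eⱼₖ` in the commutant of `ι`, and the coefficients
of `ι m * b` are `mᵢⱼ • b`; so `m ⊗ b ↦ ι m * b` is an algebra isomorphism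
`Mₙ(R) ⊗ C ≃ A`. It preserves `star` because `C` is star-closed and commutes with `ι`.
-/

open scoped TensorProduct
open Matrix

lemma Matrix.single_eq_smul_single_one {R n : Type*} [Semiring R] [DecidableEq n]
    (i j : n) (x : R) :
    single i j x = x • single i j (1 : R) := by
  rw [smul_single, smul_eq_mul, mul_one]

namespace AlgHom

variable {R n A : Type*} [CommSemiring R] [Fintype n] [DecidableEq n] [Semiring A] [Algebra R A]
  (ι : Matrix n n R →ₐ[R] A)

lemma map_single_one_mul_map_single_one (i j k l : n) :
    ι (single i j 1) * ι (single k l 1) = if j = k then ι (single i l 1) else 0 := by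
  rw [← map_mul]
  split_ifs with h
  · rw [h, single_mul_single_same, one_mul]
  · rw [single_mul_single_of_ne (h := h), map_zero]

lemma sum_map_single_one_diag : ∑ i, ι (single i i 1) = 1 := by
  rw [← map_sum, sum_single_one, map_one]

lemma commute_map_of_mem_centralizer {b : A} (hb : b ∈ Subalgebra.centralizer R (Set.range ι))
    (m : Matrix n n R) : Commute (ι m) b :=
  hb _ ⟨m, rfl⟩

def centralizerEntry (i j : n) : A →ₗ[R] A :=
  ∑ k, LinearMap.mulLeftRight R (ι (single k i 1), ι (single j k 1))

lemma centralizerEntry_apply (i j : n) (T : A) :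
    ι.centralizerEntry i j T = ∑ k, ι (single k i 1) * T * ι (single j k 1) := by
  simp [centralizerEntry, LinearMap.mulLeftRight_apply]

lemma map_single_one_mul_centralizerEntry (i j p q : n) (T : A) :
    ι (single p q 1) * ι.centralizerEntry i j T = ι (single p i 1) * T * ι (single j q 1) := by
  simp [centralizerEntry_apply, Finset.mul_sum, ← mul_assoc, map_single_one_mul_map_single_one]

lemma centralizerEntry_mul_map_single_one (i j p q : n) (T : A) :
    ι.centralizerEntry i j T * ι (single p q 1) = ι (single p i 1) * T * ι (single j q 1) := by
  simp [centralizerEntry_apply, Finset.sum_mul, mul_assoc, map_single_one_mul_map_single_one]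

lemma centralizerEntry_mem_centralizer (i j : n) (T : A) :
    ι.centralizerEntry i j T ∈ Subalgebra.centralizer R (Set.range ι) := by
  rintro _ ⟨m, rfl⟩
  induction m using Matrix.induction_on' with
  | h_zero => simp
  | h_add p q hp hq => rw [map_add, add_mul, mul_add, hp, hq]
  | h_std_basis p q x =>
    rw [single_eq_smul_single_one, map_smul, smul_mul_assoc, mul_smul_comm,
      map_single_one_mul_centralizerEntry, centralizerEntry_mul_map_single_one]

lemma centralizerEntry_map_mul {b : A} (hb : b ∈ Subalgebra.centralizer R (Set.range ι))
    (m : Matrix n n R) (i j : n) : ι.centralizerEntry i j (ι m * b) = m i j • b := by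
  have hsandwich : ∀ k, ι (single k i 1) * (ι m * b) * ι (single j k 1)
      = m i j • (ι (single k k 1) * b) := fun k => by
    rw [mul_assoc, mul_assoc, ← (ι.commute_map_of_mem_centralizer hb _).eq, ← mul_assoc,
      ← mul_assoc, ← map_mul, ← map_mul, single_mul_mul_single, one_mul, mul_one,
      single_eq_smul_single_one, map_smul, smul_mul_assoc]
  simp only [centralizerEntry_apply, hsandwich, ← Finset.smul_sum, ← Finset.sum_mul,
    sum_map_single_one_diag, one_mul]

def tensorCentralizerHom :
    Matrix n n R ⊗[R] Subalgebra.centralizer R (Set.range ι) →ₐ[R] A :=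
  Algebra.TensorProduct.lift ι (Subalgebra.centralizer R _).val
    fun m b => ι.commute_map_of_mem_centralizer b.2 m

def tensorCentralizerInv :
    A →ₗ[R] Matrix n n R ⊗[R] Subalgebra.centralizer R (Set.range ι) :=
  ∑ i, ∑ j, TensorProduct.mk R _ _ (single i j 1) ∘ₗ
    (ι.centralizerEntry i j).codRestrict (Subalgebra.centralizer R _).toSubmodule
      (ι.centralizerEntry_mem_centralizer i j)

lemma tensorCentralizerHom_tmul (m : Matrix n n R) (b : Subalgebra.centralizer R (Set.range ι)) :
    ι.tensorCentralizerHom (m ⊗ₜ b) = ι m * b :=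
  Algebra.TensorProduct.lift_tmul _ _ _ m b

lemma tensorCentralizerInv_apply (T : A) :
    ι.tensorCentralizerInv T = ∑ i, ∑ j,
      single i j 1 ⊗ₜ ⟨ι.centralizerEntry i j T, ι.centralizerEntry_mem_centralizer i j T⟩ := by
  simp only [tensorCentralizerInv, LinearMap.sum_apply, LinearMap.comp_apply,
    TensorProduct.mk_apply]
  rfl

lemma tensorCentralizerHom_inv (T : A) : ι.tensorCentralizerHom (ι.tensorCentralizerInv T) = T := by
  simp only [tensorCentralizerInv_apply, map_sum, tensorCentralizerHom_tmul,
    map_single_one_mul_centralizerEntry]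
  rw [← Finset.sum_mul_sum, ← Finset.sum_mul, sum_map_single_one_diag, one_mul, mul_one]

lemma tensorCentralizerInv_hom (x : Matrix n n R ⊗[R] Subalgebra.centralizer R (Set.range ι)) :
    ι.tensorCentralizerInv (ι.tensorCentralizerHom x) = x := by
  induction x using TensorProduct.induction_on with
  | zero => simp
  | add x y hx hy => rw [map_add, map_add, hx, hy]
  | tmul m b =>
    have hentry : ∀ i j, (⟨ι.centralizerEntry i j (ι m * b),
        ι.centralizerEntry_mem_centralizer i j _⟩ : Subalgebra.centralizer R (Set.range ι))
          = m i j • b :=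
      fun i j => Subtype.ext (ι.centralizerEntry_map_mul b.2 m i j)
    simp only [tensorCentralizerHom_tmul, tensorCentralizerInv_apply, hentry,
      ← TensorProduct.smul_tmul, smul_single, smul_eq_mul, mul_one, ← TensorProduct.sum_tmul,
      ← matrix_eq_sum_single]

def tensorCentralizerEquiv :
    Matrix n n R ⊗[R] Subalgebra.centralizer R (Set.range ι) ≃ₐ[R] A :=
  AlgEquiv.ofBijective ι.tensorCentralizerHom
    ⟨Function.LeftInverse.injective ι.tensorCentralizerInv_hom,
      Function.RightInverse.surjective ι.tensorCentralizerHom_inv⟩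

lemma tensorCentralizerEquiv_tmul (m : Matrix n n R) (b : Subalgebra.centralizer R (Set.range ι)) :
    ι.tensorCentralizerEquiv (m ⊗ₜ b) = ι m * b :=
  ι.tensorCentralizerHom_tmul m b

end AlgHom

lemma Matrix.fin_two_eq_pauli_sum (m : Matrix (Fin 2) (Fin 2) ℂ) :
    m = ((m 0 0 + m 1 1) / 2) • (1 : Matrix (Fin 2) (Fin 2) ℂ)
      + ((m 0 1 + m 1 0) / 2) • !![0, 1; 1, 0]
      + (Complex.I * (m 0 1 - m 1 0) / 2) • !![0, -Complex.I; Complex.I, 0]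
      + ((m 0 0 - m 1 1) / 2) • !![1, 0; 0, -1] := by
  ext i j
  fin_cases i <;> fin_cases j <;> simp <;> ring_nf <;> simp [Complex.I_sq] <;> ring

lemma AlgHom.commute_map_of_commute_pauli {A : Type*} [Semiring A] [Algebra ℂ A]
    (ι : Matrix (Fin 2) (Fin 2) ℂ →ₐ[ℂ] A) {x : A}
    (h₁ : Commute (ι !![0, 1; 1, 0]) x) (h₂ : Commute (ι !![0, -Complex.I; Complex.I, 0]) x)
    (h₃ : Commute (ι !![1, 0; 0, -1]) x) (m : Matrix (Fin 2) (Fin 2) ℂ) : Commute (ι m) x := by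
  rw [m.fin_two_eq_pauli_sum]
  simp only [map_add, map_smul, map_one]
  exact ((((Commute.one_left x).smul_left _).add_left (h₁.smul_left _)).add_left
    (h₂.smul_left _)).add_left (h₃.smul_left _)

lemma StarAlgHom.centralizer_pauli_eq_centralizer_range {A : Type*} [Semiring A] [Algebra ℂ A]
    [StarRing A] [StarModule ℂ A] (ι : Matrix (Fin 2) (Fin 2) ℂ →⋆ₐ[ℂ] A) :
    (StarSubalgebra.centralizer ℂ
        {ι !![0, 1; 1, 0], ι !![0, -Complex.I; Complex.I, 0], ι !![1, 0; 0, -1]}).toSubalgebra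
      = Subalgebra.centralizer ℂ (Set.range ι.toAlgHom) := by
  have hrange : {ι !![0, 1; 1, 0], ι !![0, -Complex.I; Complex.I, 0], ι !![1, 0; 0, -1]}
      ⊆ Set.range ι.toAlgHom := by
    rintro _ (rfl | rfl | rfl) <;> exact ⟨_, rfl⟩
  apply le_antisymm
  · rintro x hx _ ⟨m, rfl⟩
    have hpauli := Set.centralizer_subset Set.subset_union_left hx
    exact ι.toAlgHom.commute_map_of_commute_pauli
      (hpauli _ (by simp)) (hpauli _ (by simp)) (hpauli _ (by simp)) m
  · apply Subalgebra.centralizer_le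
    rintro x (hx | hx)
    · exact hrange hx
    · obtain ⟨m, hm⟩ := hrange hx
      exact ⟨star m, by simpa [map_star] using congrArg star hm⟩

open scoped TensorProduct in
theorem tensor_product_structure_general
    (U : ℝ → (H →L[ℂ] H)) (V : unitary (H →L[ℂ] H)) :
    ∀ ι : Matrix (Fin 2) (Fin 2) ℂ →⋆ₐ[ℂ] (H →L[ℂ] H),
      ι !![0, 1; 1, 0] = a₁ U V →
      ι !![0, -Complex.I; Complex.I, 0] = a₂ U V →
      ι !![1, 0; 0, -1] = a₃ U →
      ∃ π : (Matrix (Fin 2) (Fin 2) ℂ ⊗[ℂ]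
          (StarSubalgebra.centralizer ℂ ({a₁ U V, a₂ U V, a₃ U} : Set (H →L[ℂ] H))))
            ≃ₐ[ℂ] (H →L[ℂ] H),
        (∀ (m : Matrix (Fin 2) (Fin 2) ℂ)
            (b : StarSubalgebra.centralizer ℂ ({a₁ U V, a₂ U V, a₃ U} : Set (H →L[ℂ] H))),
          π (m ⊗ₜ[ℂ] b) = ι m ∘L (b : H →L[ℂ] H)) ∧
        (∀ (m : Matrix (Fin 2) (Fin 2) ℂ)
            (b : StarSubalgebra.centralizer ℂ ({a₁ U V, a₂ U V, a₃ U} : Set (H →L[ℂ] H))),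
          π (star m ⊗ₜ[ℂ] star b) = star (π (m ⊗ₜ[ℂ] b))) := by
  intro ι h₁ h₂ h₃
  have hC : (StarSubalgebra.centralizer ℂ ({a₁ U V, a₂ U V, a₃ U} : Set (H →L[ℂ] H))).toSubalgebra
      = Subalgebra.centralizer ℂ (Set.range ι.toAlgHom) := by
    rw [← h₁, ← h₂, ← h₃, ι.centralizer_pauli_eq_centralizer_range]
  let π := (Algebra.TensorProduct.congr AlgEquiv.refl (Subalgebra.equivOfEq _ _ hC)).trans
    ι.toAlgHom.tensorCentralizerEquiv
  have hπ : ∀ m b, π (m ⊗ₜ[ℂ] b) = ι m * b := fun m b =>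
    ι.toAlgHom.tensorCentralizerEquiv_tmul m _
  refine ⟨π, hπ, fun m b => ?_⟩
  rw [hπ, hπ, star_mul, ← map_star]
  have hb : ((star b : _) : H →L[ℂ] H) ∈ Subalgebra.centralizer ℂ (Set.range ι.toAlgHom) :=
    hC ▸ (star b).2
  exact (ι.toAlgHom.commute_map_of_mem_centralizer hb _).eq

open scoped TensorProduct in
/-- **Tensor product structure:** with `C` the commutant of `{a₁, a₂, a₃}` in `B(H)`
(a star subalgebra) and `ι : M₂(ℂ) → B(H)` the unital star-algebra homomorphism with
`ι σᵢ = aᵢ`, there is a `ℂ`-algebra equivalence `π : M₂(ℂ) ⊗[ℂ] C ≃ B(H)` with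
`π (m ⊗ b) = ι m ∘ b`, and `π` is star-preserving. -/
theorem tensor_product_structure
    (U : ℝ → (H →L[ℂ] H)) (V : unitary (H →L[ℂ] H))
    (hU : ∀ (θ : ℝ) (ℓ : ℤ), U θ (e ℓ) = Complex.exp (Complex.I * ℓ * θ) • e ℓ)
    (hV : ∀ ℓ : ℤ, (V : H →L[ℂ] H) (e ℓ) = e (ℓ + 1)) :
    ∀ ι : Matrix (Fin 2) (Fin 2) ℂ →⋆ₐ[ℂ] (H →L[ℂ] H),
      ι !![0, 1; 1, 0] = a₁ U V →
      ι !![0, -Complex.I; Complex.I, 0] = a₂ U V →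
      ι !![1, 0; 0, -1] = a₃ U →
      ∃ π : (Matrix (Fin 2) (Fin 2) ℂ ⊗[ℂ]
          (StarSubalgebra.centralizer ℂ ({a₁ U V, a₂ U V, a₃ U} : Set (H →L[ℂ] H))))
            ≃ₐ[ℂ] (H →L[ℂ] H),
        (∀ (m : Matrix (Fin 2) (Fin 2) ℂ)
            (b : StarSubalgebra.centralizer ℂ ({a₁ U V, a₂ U V, a₃ U} : Set (H →L[ℂ] H))),
          π (m ⊗ₜ[ℂ] b) = ι m ∘L (b : H →L[ℂ] H)) ∧
        (∀ (m : Matrix (Fin 2) (Fin 2) ℂ)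
            (b : StarSubalgebra.centralizer ℂ ({a₁ U V, a₂ U V, a₃ U} : Set (H →L[ℂ] H))),
          π (star m ⊗ₜ[ℂ] star b) = star (π (m ⊗ₜ[ℂ] b))) :=
  tensor_product_structure_general U V
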